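/- arXiv:1402.6032 — 7 statements merged into one kernel-verified Lean document; each statement's English description precedes it below -/
import Mathlib

section
/- Let A be a ring and e ∈ A an idempotent with AeA = A. Let M be a right A-module and N a left A-module. Then the natural map Me ⊗_{eAe} eN → M ⊗_A N given by me ⊗ en ↦ me ⊗ en is an isomorphism of abelian groups. -/
noncomputable section

variable (A : Type*) [Ring A] (e : A)
variable (M : Type*) [AddCommGroup M] [Module Aᵐᵒᵖ M]
variable (N : Type*) [AddCommGroup N] [Module A N]

/-- The additive map `m ↦ m·e` on a right `A`-module `M`. -/
def rightMulBy : M →+ M :=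
  AddMonoidHom.mk' (fun m => MulOpposite.op e • m) (fun a b => smul_add _ a b)

/-- The additive map `n ↦ e·n` on a left `A`-module `N`. -/
def leftMulBy : N →+ N :=
  AddMonoidHom.mk' (fun n => e • n) (fun a b => smul_add _ a b)

/-- `Me = {m·e : m ∈ M}` as an additive subgroup of `M`. -/
def Msube : AddSubgroup M := (rightMulBy A e M).range

/-- `eN = {e·n : n ∈ N}` as an additive subgroup of `N`. -/
def eSubN : AddSubgroup N := (leftMulBy A e N).range

/-- The defining relations of the tensor product `M ⊗_A N` of a right `A`-module and a
left `A`-module: biadditivity and `A`-balancedness. -/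
def tensRelA : Set (FreeAbelianGroup (M × N)) :=
  {x | ∃ m m' n, x = FreeAbelianGroup.of (m + m', n) - FreeAbelianGroup.of (m, n)
        - FreeAbelianGroup.of (m', n)} ∪
  {x | ∃ m n n', x = FreeAbelianGroup.of (m, n + n') - FreeAbelianGroup.of (m, n)
        - FreeAbelianGroup.of (m, n')} ∪
  {x | ∃ (m : M) (n : N) (a : A),
    x = FreeAbelianGroup.of (MulOpposite.op a • m, n) - FreeAbelianGroup.of (m, a • n)}

/-- The tensor product `M ⊗_A N` over the (noncommutative) ring `A`, as an abelian
group: the quotient of the free abelian group on `M × N` by biadditivity and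
balancedness relations. -/
def TensA := FreeAbelianGroup (M × N) ⧸ AddSubgroup.closure (tensRelA A M N)

/-- The defining relations of `Me ⊗_{eAe} eN`: biadditivity and `eAe`-balancedness. -/
def tensRelE : Set (FreeAbelianGroup (Msube A e M × eSubN A e N)) :=
  {x | ∃ m m' n, x = FreeAbelianGroup.of (m + m', n) - FreeAbelianGroup.of (m, n)
        - FreeAbelianGroup.of (m', n)} ∪
  {x | ∃ m n n', x = FreeAbelianGroup.of (m, n + n') - FreeAbelianGroup.of (m, n)
        - FreeAbelianGroup.of (m, n')} ∪
  {x | ∃ (m mr : Msube A e M) (n rn : eSubN A e N) (a : A),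
    (mr : M) = MulOpposite.op (e * a * e) • (m : M) ∧
    ((rn : N) = (e * a * e) • (n : N)) ∧
    x = FreeAbelianGroup.of (mr, n) - FreeAbelianGroup.of (m, rn)}

/-- The tensor product `Me ⊗_{eAe} eN` over the corner ring `eAe`, as an abelian
group. -/
def TensE := FreeAbelianGroup (Msube A e M × eSubN A e N) ⧸
  AddSubgroup.closure (tensRelE A e M N)

instance : AddCommGroup (TensA A M N) := by unfold TensA; infer_instance
instance : AddCommGroup (TensE A e M N) := by unfold TensE; infer_instance

/-! Since `AeA = A`, write `1 = ∑ aᵢ e bᵢ`. The inverse map sends `m ⊗ n` to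
`∑ m aᵢ e ⊗ e bᵢ n`. It is `A`-balanced because inserting `1 = ∑ aⱼ e bⱼ` rewrites
`m r aᵢ e` as `∑ⱼ (m aⱼ e)(e bⱼ r aᵢ e)`, whose second factor lies in `eAe` and can
be moved across the tensor sign. Both composites fix generators, again by
`1 = ∑ aᵢ e bᵢ` and `e² = e`. -/

open MulOpposite

section Presentation

variable {X G : Type*} [AddCommGroup G] {R : Set (FreeAbelianGroup X)}

lemma mk_eq_of_sub_mem_rel {x y : FreeAbelianGroup X} (h : x - y ∈ R) :
    (x : FreeAbelianGroup X ⧸ AddSubgroup.closure R) = y :=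
  QuotientAddGroup.eq_iff_sub_mem.2 (AddSubgroup.subset_closure h)

lemma mk_eq_add_of_sub_sub_mem_rel {x y z : FreeAbelianGroup X} (h : x - y - z ∈ R) :
    (x : FreeAbelianGroup X ⧸ AddSubgroup.closure R) = y + z :=
  (mk_eq_of_sub_mem_rel (by rwa [← sub_sub])).trans (QuotientAddGroup.mk_add _ _ _)

def presentationLift (f : X → G) (hf : ∀ r ∈ R, FreeAbelianGroup.lift f r = 0) :
    FreeAbelianGroup X ⧸ AddSubgroup.closure R →+ G :=
  QuotientAddGroup.lift _ (FreeAbelianGroup.lift f) ((AddSubgroup.closure_le _).2 hf)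

lemma presentationLift_mk_of (f : X → G) (hf : ∀ r ∈ R, FreeAbelianGroup.lift f r = 0)
    (x : X) :
    presentationLift f hf (FreeAbelianGroup.of x) = f x := by
  simp [presentationLift]

lemma presentation_hom_ext {φ ψ : FreeAbelianGroup X ⧸ AddSubgroup.closure R →+ G}
    (h : ∀ x, φ (QuotientAddGroup.mk (FreeAbelianGroup.of x)) =
      ψ (QuotientAddGroup.mk (FreeAbelianGroup.of x))) : φ = ψ :=
  QuotientAddGroup.addMonoidHom_ext _ (FreeAbelianGroup.lift_ext _ _ h)

end Presentation

namespace TensA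

variable {A M N} {G : Type*} [AddCommGroup G]

variable (A) in
def tmul : M →+ N →+ TensA A M N :=
  AddMonoidHom.mk'
    (fun m => AddMonoidHom.mk' (fun n => QuotientAddGroup.mk (FreeAbelianGroup.of (m, n)))
      fun n n' => mk_eq_add_of_sub_sub_mem_rel (Or.inl (Or.inr ⟨m, n, n', rfl⟩)))
    fun m m' => AddMonoidHom.ext fun n =>
      mk_eq_add_of_sub_sub_mem_rel (Or.inl (Or.inl ⟨m, m', n, rfl⟩))

lemma op_smul_tmul (a : A) (m : M) (n : N) : tmul A (op a • m) n = tmul A m (a • n) :=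
  mk_eq_of_sub_mem_rel (Or.inr ⟨m, n, a, rfl⟩)

def lift (f : M →+ N →+ G)
    (hf : ∀ (a : A) (m : M) (n : N), f (op a • m) n = f m (a • n)) : TensA A M N →+ G :=
  presentationLift (fun p => f p.1 p.2) <| by
    rintro r (((⟨m, m', n, rfl⟩ | ⟨m, n, n', rfl⟩)) | ⟨m, n, a, rfl⟩) <;> simp [hf]

lemma lift_tmul (f : M →+ N →+ G)
    (hf : ∀ (a : A) (m : M) (n : N), f (op a • m) n = f m (a • n)) (m : M) (n : N) :
    lift f hf (tmul A m n) = f m n :=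
  presentationLift_mk_of _ _ (m, n)

lemma hom_ext {φ ψ : TensA A M N →+ G} (h : ∀ m n, φ (tmul A m n) = ψ (tmul A m n)) :
    φ = ψ :=
  presentation_hom_ext fun p => h p.1 p.2

end TensA

namespace TensE

variable {A e M N} {G : Type*} [AddCommGroup G]

variable (A e) in
def tmul : Msube A e M →+ eSubN A e N →+ TensE A e M N :=
  AddMonoidHom.mk'
    (fun x => AddMonoidHom.mk' (fun y => QuotientAddGroup.mk (FreeAbelianGroup.of (x, y)))
      fun y y' => mk_eq_add_of_sub_sub_mem_rel (Or.inl (Or.inr ⟨x, y, y', rfl⟩)))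
    fun x x' => AddMonoidHom.ext fun y =>
      mk_eq_add_of_sub_sub_mem_rel (Or.inl (Or.inl ⟨x, x', y, rfl⟩))

lemma tmul_eq_tmul_of_corner_smul (a : A) {x x' : Msube A e M} {y y' : eSubN A e N}
    (hx : (x' : M) = op (e * a * e) • (x : M)) (hy : (y' : N) = (e * a * e) • (y : N)) :
    tmul A e x' y = tmul A e x y' :=
  mk_eq_of_sub_mem_rel (Or.inr ⟨x, x', y, y', a, hx, hy, rfl⟩)

def lift (f : Msube A e M →+ eSubN A e N →+ G)
    (hf : ∀ (a : A) (x x' : Msube A e M) (y y' : eSubN A e N),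
      (x' : M) = op (e * a * e) • (x : M) → (y' : N) = (e * a * e) • (y : N) →
        f x' y = f x y') :
    TensE A e M N →+ G :=
  presentationLift (fun p => f p.1 p.2) <| by
    rintro r (((⟨x, x', y, rfl⟩ | ⟨x, y, y', rfl⟩)) | ⟨x, x', y, y', a, hx, hy, rfl⟩)
    · simp
    · simp
    · simp [hf a x x' y y' hx hy]

lemma lift_tmul (f : Msube A e M →+ eSubN A e N →+ G)
    (hf : ∀ (a : A) (x x' : Msube A e M) (y y' : eSubN A e N),
      (x' : M) = op (e * a * e) • (x : M) → (y' : N) = (e * a * e) • (y : N) →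
        f x' y = f x y')
    (x : Msube A e M) (y : eSubN A e N) : lift f hf (tmul A e x y) = f x y :=
  presentationLift_mk_of _ _ (x, y)

lemma hom_ext {φ ψ : TensE A e M N →+ G} (h : ∀ x y, φ (tmul A e x y) = ψ (tmul A e x y)) :
    φ = ψ :=
  presentation_hom_ext fun p => h p.1 p.2

end TensE

section Corner

variable {A e M N}

lemma op_smul_eq_self_of_mem_Msube (he : IsIdempotentElem e) {m : M} (hm : m ∈ Msube A e M) :
    op e • m = m := by
  obtain ⟨m, rfl⟩ := hm
  change op e • op e • m = op e • m
  rw [← mul_smul, ← op_mul, he.eq]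

lemma smul_eq_self_of_mem_eSubN (he : IsIdempotentElem e) {n : N} (hn : n ∈ eSubN A e N) :
    e • n = n := by
  obtain ⟨n, rfl⟩ := hn
  change e • e • n = e • n
  rw [← mul_smul, he.eq]

variable (A e M N) in
def cornerTmul : M →+ N →+ TensE A e M N :=
  ((TensE.tmul A e).comp (rightMulBy A e M).rangeRestrict).compl₂ (leftMulBy A e N).rangeRestrict

lemma cornerTmul_apply (m : M) (n : N) :
    cornerTmul A e M N m n =
      TensE.tmul A e ((rightMulBy A e M).rangeRestrict m) ((leftMulBy A e N).rangeRestrict n) :=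
  rfl

lemma cornerTmul_coe (he : IsIdempotentElem e) (x : Msube A e M) (y : eSubN A e N) :
    cornerTmul A e M N x y = TensE.tmul A e x y := by
  have hx : (rightMulBy A e M).rangeRestrict x = x :=
    Subtype.ext (op_smul_eq_self_of_mem_Msube he x.2)
  have hy : (leftMulBy A e N).rangeRestrict y = y :=
    Subtype.ext (smul_eq_self_of_mem_eSubN he y.2)
  rw [cornerTmul_apply, hx, hy]

lemma cornerTmul_op_smul (he : IsIdempotentElem e) (c : A) (m : M) (n : N) :
    cornerTmul A e M N (op (e * c) • m) n = cornerTmul A e M N m ((c * e) • n) := by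
  refine TensE.tmul_eq_tmul_of_corner_smul c ?_ ?_
  · change op e • op (e * c) • m = op (e * c * e) • op e • m
    simp only [← mul_smul, ← op_mul, ← mul_assoc, he.eq]
  · change e • (c * e) • n = (e * c * e) • e • n
    simp only [← mul_smul, mul_assoc, he.eq]

variable {ι : Type*} [Fintype ι] {a b : ι → A}

lemma cornerTmul_op_smul_eq_sum (he : IsIdempotentElem e) (hab : ∑ i, a i * e * b i = 1)
    (c : A) (m : M) (n : N) :
    cornerTmul A e M N (op c • m) n =
      ∑ i, cornerTmul A e M N (op (a i) • m) ((b i * c * e) • n) := by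
  have hm : op c • m = ∑ i, op (e * (b i * c)) • op (a i) • m := by
    simp only [← mul_smul, ← op_mul, ← Finset.sum_smul, ← Finset.op_sum]
    simp only [← mul_assoc, ← Finset.sum_mul, hab, one_mul]
  rw [hm, map_sum, AddMonoidHom.finsetSum_apply]
  exact Finset.sum_congr rfl fun i _ => cornerTmul_op_smul he _ _ _

lemma sum_cornerTmul_op_mul_smul (he : IsIdempotentElem e) (hab : ∑ i, a i * e * b i = 1)
    (r : A) (m : M) (n : N) :
    ∑ i, cornerTmul A e M N (op (r * a i) • m) (b i • n) =
      ∑ j, cornerTmul A e M N (op (a j) • m) ((b j * r) • n) := by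
  have hn : ∀ j, ∑ i, (b j * (r * a i) * e) • b i • n = (b j * r) • n := fun j => by
    simp only [← mul_smul, ← Finset.sum_smul]
    congr 1
    calc ∑ i, b j * (r * a i) * e * b i = b j * r * ∑ i, a i * e * b i := by
          simp only [Finset.mul_sum, mul_assoc]
      _ = b j * r := by rw [hab, mul_one]
  calc ∑ i, cornerTmul A e M N (op (r * a i) • m) (b i • n)
      = ∑ i, ∑ j, cornerTmul A e M N (op (a j) • m) ((b j * (r * a i) * e) • b i • n) :=
        Finset.sum_congr rfl fun i _ => cornerTmul_op_smul_eq_sum he hab _ _ _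
    _ = ∑ j, cornerTmul A e M N (op (a j) • m)
          (∑ i, (b j * (r * a i) * e) • b i • n) := by
        rw [Finset.sum_comm]
        simp only [map_sum]
    _ = ∑ j, cornerTmul A e M N (op (a j) • m) ((b j * r) • n) := by simp only [hn]

def tensToCorner (he : IsIdempotentElem e) (hab : ∑ i, a i * e * b i = 1) :
    TensA A M N →+ TensE A e M N :=
  TensA.lift
    (∑ i, ((cornerTmul A e M N).comp (DistribSMul.toAddMonoidHom M (op (a i)))).compl₂
      (DistribSMul.toAddMonoidHom N (b i))) fun r m n => by
    simpa [AddMonoidHom.finsetSum_apply, ← mul_smul, op_mul]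
      using sum_cornerTmul_op_mul_smul he hab r m n

lemma tensToCorner_tmul (he : IsIdempotentElem e) (hab : ∑ i, a i * e * b i = 1)
    (m : M) (n : N) :
    tensToCorner he hab (TensA.tmul A m n) =
      ∑ i, cornerTmul A e M N (op (a i) • m) (b i • n) := by
  simp [tensToCorner, TensA.lift_tmul, AddMonoidHom.finsetSum_apply]

variable (A e M N) in
def cornerToTens : TensE A e M N →+ TensA A M N :=
  TensE.lift (((TensA.tmul A).comp (Msube A e M).subtype).compl₂ (eSubN A e N).subtype)
    fun c x x' y y' hx hy => by
      change TensA.tmul A (x' : M) (y : N) = TensA.tmul A (x : M) (y' : N)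
      rw [hx, hy, TensA.op_smul_tmul]

lemma cornerToTens_tmul (x : Msube A e M) (y : eSubN A e N) :
    cornerToTens A e M N (TensE.tmul A e x y) = TensA.tmul A (x : M) (y : N) :=
  TensE.lift_tmul _ _ x y

lemma cornerToTens_cornerTmul (m : M) (n : N) :
    cornerToTens A e M N (cornerTmul A e M N m n) = TensA.tmul A (op e • m) (e • n) :=
  cornerToTens_tmul _ _

lemma tensToCorner_comp_cornerToTens (he : IsIdempotentElem e) (hab : ∑ i, a i * e * b i = 1) :
    (tensToCorner he hab).comp (cornerToTens A e M N) = AddMonoidHom.id _ :=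
  TensE.hom_ext fun x y => by
    have hx : ∀ i, op (a i) • (x : M) = op (e * a i) • (x : M) := fun i => by
      rw [op_mul, mul_smul, op_smul_eq_self_of_mem_Msube he x.2]
    calc tensToCorner he hab (cornerToTens A e M N (TensE.tmul A e x y))
        = ∑ i, cornerTmul A e M N (op (a i) • (x : M)) (b i • (y : N)) := by
          rw [cornerToTens_tmul, tensToCorner_tmul]
      _ = ∑ i, cornerTmul A e M N x ((a i * e) • b i • (y : N)) :=
          Finset.sum_congr rfl fun i _ => by rw [hx, cornerTmul_op_smul he]
      _ = cornerTmul A e M N x ((∑ i, a i * e * b i) • (y : N)) := by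
          simp only [← mul_smul, Finset.sum_smul, map_sum]
      _ = TensE.tmul A e x y := by rw [hab, one_smul, cornerTmul_coe he]

lemma cornerToTens_comp_tensToCorner (he : IsIdempotentElem e) (hab : ∑ i, a i * e * b i = 1) :
    (cornerToTens A e M N).comp (tensToCorner he hab) = AddMonoidHom.id _ :=
  TensA.hom_ext fun m n => by
    calc cornerToTens A e M N (tensToCorner he hab (TensA.tmul A m n))
        = ∑ i, TensA.tmul A (op e • op (a i) • m) (e • b i • n) := by
          simp only [tensToCorner_tmul, map_sum, cornerToTens_cornerTmul]
      _ = ∑ i, TensA.tmul A m ((a i * e * b i) • n) :=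
          Finset.sum_congr rfl fun i _ => by
            rw [← mul_smul, ← op_mul, TensA.op_smul_tmul]
            simp only [← mul_smul, ← mul_assoc, he.mul_mul_self]
      _ = TensA.tmul A m n := by rw [← map_sum, ← Finset.sum_smul, hab, one_smul]

end Corner

lemma exists_sum_mul_mul_eq_of_mem_span {R : Type*} [Ring R] {e z : R}
    (hz : z ∈ TwoSidedIdeal.span {e}) :
    ∃ (k : ℕ) (a b : Fin k → R), ∑ i, a i * e * b i = z := by
  rw [TwoSidedIdeal.mem_span_iff_mem_addSubgroup_closure] at hz
  induction hz using AddSubgroup.closure_induction with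
  | mem x hx =>
    obtain ⟨_, ⟨u, -, _, rfl, rfl⟩, w, -, rfl⟩ := hx
    exact ⟨1, fun _ => u, fun _ => w, by simp⟩
  | zero => exact ⟨0, Fin.elim0, Fin.elim0, by simp⟩
  | add x y _ _ hx hy =>
    obtain ⟨k, a, b, rfl⟩ := hx
    obtain ⟨l, c, d, rfl⟩ := hy
    exact ⟨k + l, Fin.append a c, Fin.append b d, by simp [Fin.sum_univ_add]⟩
  | neg x _ hx =>
    obtain ⟨k, a, b, rfl⟩ := hx
    exact ⟨k, fun i => -a i, b, by simp⟩

/-- Morita invariance of the tensor product: if `e ∈ A` is an idempotent with `AeA = A`,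
`M` a right `A`-module and `N` a left `A`-module, then the natural additive map
`Me ⊗_{eAe} eN → M ⊗_A N`, `me ⊗ en ↦ me ⊗ en`, is an isomorphism of abelian
groups. -/
theorem corner_tensor_equiv (he : IsIdempotentElem e)
    (hfull : TwoSidedIdeal.span ({e} : Set A) = ⊤) :
    ∃ φ : TensE A e M N →+ TensA A M N,
      (∀ (m : Msube A e M) (n : eSubN A e N),
        φ (QuotientAddGroup.mk (FreeAbelianGroup.of (m, n)))
          = QuotientAddGroup.mk (FreeAbelianGroup.of ((m : M), (n : N)))) ∧
      Function.Bijective φ := by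
  have h1 : (1 : A) ∈ TwoSidedIdeal.span {e} := hfull ▸ trivial
  obtain ⟨k, a, b, hab⟩ := exists_sum_mul_mul_eq_of_mem_span h1
  refine ⟨cornerToTens A e M N, cornerToTens_tmul, ?_⟩
  exact (AddMonoidHom.toAddEquiv _ _ (tensToCorner_comp_cornerToTens he hab)
    (cornerToTens_comp_tensToCorner he hab)).bijective

end
end

section
/- In a commutative ring R with a unit q and element X, define the matrices B = diag(−1, 1) and A(X) the 2×2 upper-triangular matrix with entries A₁₁ = −1, A₁₂ = (−1)^p q^{2p+4}(X^{−2p−3} − q^{−4}X^{−2p+1}), A₂₁ = 0, A₂₂ = q^{4p+2}X^{−4p−2} over ℂ[X^{±1}]. Then A(X)·B·A(q²X⁻¹) = B (where A(q²X⁻¹) is obtained by substituting X ↦ q²X⁻¹). -/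
/-!
In the variable `t = q / x` and with `c = (-1)^p q`, the matrix `A(x)` is
`!![-1, c (t^(2p+3) - t^(2p-1)); 0, t^(4p+2)]`, and the substitution `x ↦ q² x⁻¹` becomes
`t ↦ t⁻¹`. In `A(t) B A(t⁻¹)` the lower diagonal entry is `t^(4p+2) t^(-4p-2) = 1`, and the
upper-right entry vanishes because `t^(-4p-2) (t^(2p+3) - t^(2p-1)) = t^(-2p+1) - t^(-2p-3)` is minus
the off-diagonal entry of `A(t⁻¹)`.
-/

noncomputable section

/-- The matrix `A(x)` defining the action of `Y` on the nonsymmetric skein module of the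
`(2,2p+1)` torus knot complement: upper triangular with entries `A₁₁ = −1`,
`A₁₂ = (−1)^p q^{2p+4}(x^{−2p−3} − q^{−4}x^{−2p+1})`, `A₂₂ = q^{4p+2}x^{−4p−2}`. -/
def torusA {F : Type*} [Field F] (q : F) (p : ℕ) (x : F) : Matrix (Fin 2) (Fin 2) F :=
  !![-1, (-1) ^ p * q ^ (2 * p + 4) *
        (x ^ (-(2 * (p : ℤ)) - 3) - q ^ (-4 : ℤ) * x ^ (-(2 * (p : ℤ)) + 1));
     0, q ^ (4 * p + 2) * x ^ (-(4 * (p : ℤ)) - 2)]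

def laurentUpper {F : Type*} [Field F] (c t : F) (n k : ℤ) : Matrix (Fin 2) (Fin 2) F :=
  !![-1, c * (t ^ (n + k) - t ^ n); 0, t ^ (2 * n + k)]

theorem negOneUpper_mul_diag_mul {R : Type*} [CommRing R] (a b d e : R) :
    !![-1, a; 0, d] * !![(-1 : R), 0; 0, 1] * !![-1, b; 0, e] = !![-1, b + a * e; 0, d * e] := by
  simp

theorem laurentUpper_mul_diag_mul_inv {F : Type*} [Field F] (c : F) {t : F} (ht : t ≠ 0)
    (n k : ℤ) :
    laurentUpper c t n k * !![(-1 : F), 0; 0, 1] * laurentUpper c t⁻¹ n k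
      = !![(-1 : F), 0; 0, 1] := by
  have h : (t ^ (n + k) - t ^ n) * t ^ (-(2 * n + k)) = t ^ (-n) - t ^ (-n - k) := by
    rw [sub_mul, ← zpow_add₀ ht, ← zpow_add₀ ht]
    ring_nf
  rw [laurentUpper, laurentUpper, negOneUpper_mul_diag_mul, inv_zpow', inv_zpow', inv_zpow',
    mul_assoc, h, ← zpow_add₀ ht, add_neg_cancel, zpow_zero, neg_add']
  ring_nf

theorem zpow_eq_zpow_mul_div_zpow_neg {F : Type*} [Field F] {q : F} (x : F) (hq : q ≠ 0)
    (m : ℤ) : x ^ m = q ^ m * (q / x) ^ (-m) := by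
  rw [zpow_neg, div_zpow, inv_div, mul_div_cancel₀ _ (zpow_ne_zero m hq)]

theorem torusA_eq_laurentUpper {F : Type*} [Field F] {q : F} (hq : q ≠ 0) (p : ℕ) (x : F) :
    torusA q p x = laurentUpper ((-1) ^ p * q) (q / x) (2 * p - 1) 4 := by
  have hb : q ^ (2 * p + 4) * q ^ (-(2 * (p : ℤ)) - 3) = q := by
    rw [← zpow_natCast, ← zpow_add₀ hq]; push_cast; ring_nf; exact zpow_one q
  have hb' : q ^ (2 * p + 4) * (q ^ (-4 : ℤ) * q ^ (-(2 * (p : ℤ)) + 1)) = q := by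
    rw [← zpow_natCast, ← zpow_add₀ hq, ← zpow_add₀ hq]; push_cast; ring_nf; exact zpow_one q
  have hd : q ^ (4 * p + 2) * q ^ (-(4 * (p : ℤ)) - 2) = 1 := by
    rw [← zpow_natCast, ← zpow_add₀ hq]; push_cast; ring_nf; exact zpow_zero q
  have h12 : (-1) ^ p * q ^ (2 * p + 4) *
      (x ^ (-(2 * (p : ℤ)) - 3) - q ^ (-4 : ℤ) * x ^ (-(2 * (p : ℤ)) + 1))
      = (-1) ^ p * q * ((q / x) ^ (2 * (p : ℤ) - 1 + 4) - (q / x) ^ (2 * (p : ℤ) - 1)) := by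
    simp only [zpow_eq_zpow_mul_div_zpow_neg x hq]
    linear_combination (norm := ring_nf)
      (-1) ^ p * ((q / x) ^ (2 * (p : ℤ) + 3) * hb - (q / x) ^ (2 * (p : ℤ) - 1) * hb')
  have h22 : q ^ (4 * p + 2) * x ^ (-(4 * (p : ℤ)) - 2)
      = (q / x) ^ (2 * (2 * (p : ℤ) - 1) + 4) := by
    rw [zpow_eq_zpow_mul_div_zpow_neg x hq]
    linear_combination (norm := ring_nf) (q / x) ^ (4 * (p : ℤ) + 2) * hd
  rw [torusA, laurentUpper, h12, h22]

theorem torusA_relation_general {F : Type*} [Field F] (q X : F) (hq : q ≠ 0) (hX : X ≠ 0)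
    (p : ℕ) :
    torusA q p X * !![(-1 : F), 0; 0, 1] * torusA q p (q ^ 2 * X⁻¹)
      = !![(-1 : F), 0; 0, 1] := by
  have hY : q / (q ^ 2 * X⁻¹) = (q / X)⁻¹ := by field_simp
  rw [torusA_eq_laurentUpper hq, torusA_eq_laurentUpper hq, hY]
  exact laurentUpper_mul_diag_mul_inv _ (div_ne_zero hq hX) _ _

/-- The relation `A(X)·B·A(q²X⁻¹) = B` with `B = diag(−1, 1)`, verifying that the
operators define a module over `A_q ⋊ ℤ₂` for the `(2,2p+1)` torus knot. -/
theorem torusA_relation {F : Type*} [Field F] (q X : F) (hq : q ≠ 0) (hX : X ≠ 0)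
    (p : ℕ) (hp : 1 ≤ p) :
    torusA q p X * !![(-1 : F), 0; 0, 1] * torusA q p (q ^ 2 * X⁻¹)
      = !![(-1 : F), 0; 0, 1] :=
  torusA_relation_general q X hq hX p

end
end

section
/- Define a, b, c ∈ ℂ(q)[X, X⁻¹] by a = −q⁻²X⁴ + q⁻²X² + q², b = −q⁻²X² + q²X⁻², c = q⁻²X³ − q²X⁻¹, and for f write f'(X) := f(q²X⁻¹). Then the following identities hold: b' = −b, c' = −q²X⁻²·c, a·a' − q⁴·b·b' = 1, and a'·c + q²·b'·c' + c' = 0. -/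
noncomputable section

/-- `a(x) = −q⁻²x⁴ + q⁻²x² + q²`. -/
def fig8a {F : Type*} [Field F] (q x : F) : F :=
  -q ^ (-2 : ℤ) * x ^ 4 + q ^ (-2 : ℤ) * x ^ 2 + q ^ 2

/-- `b(x) = −q⁻²x² + q²x⁻²`. -/
def fig8b {F : Type*} [Field F] (q x : F) : F :=
  -q ^ (-2 : ℤ) * x ^ 2 + q ^ 2 * x ^ (-2 : ℤ)

/-- `c(x) = q⁻²x³ − q²x⁻¹`. -/
def fig8c {F : Type*} [Field F] (q x : F) : F :=
  q ^ (-2 : ℤ) * x ^ 3 - q ^ 2 * x ^ (-1 : ℤ)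

/-! With `Y = q²X⁻¹` we have `XY = q²`, and `f'` is `f` evaluated at `Y`. Since `c = -X·b` and
`b(Y) = -b(X)`, also `c' = Y·b`; the last identity then factors as `-b·(X·a' + q²Y·b - Y) = 0`,
and both that bracket and `a·a' + q⁴b² - 1` vanish once denominators are cleared. -/

section

variable {F : Type*} [Field F] {q x y : F}

theorem fig8c_eq_neg_mul_fig8b : fig8c q x = -x * fig8b q x := by
  simp only [fig8c, fig8b, zpow_neg, zpow_ofNat]
  field_simp
  ring

theorem eq_sq_mul_inv_of_mul_eq_sq (hx : x ≠ 0) (hxy : x * y = q ^ 2) : y = q ^ 2 * x⁻¹ := by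
  rw [← hxy]
  field_simp

theorem fig8b_of_mul_eq_sq (hx : x ≠ 0) (hxy : x * y = q ^ 2) :
    fig8b q y = -fig8b q x := by
  obtain rfl := eq_sq_mul_inv_of_mul_eq_sq hx hxy
  simp only [fig8b, zpow_neg, zpow_ofNat]
  field_simp
  ring

theorem fig8a_mul_fig8a_add_fig8b_sq (hq : q ≠ 0) (hx : x ≠ 0) (hxy : x * y = q ^ 2) :
    fig8a q x * fig8a q y + q ^ 4 * fig8b q x ^ 2 = 1 := by
  obtain rfl := eq_sq_mul_inv_of_mul_eq_sq hx hxy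
  simp only [fig8a, fig8b, zpow_neg, zpow_ofNat]
  field_simp
  ring

theorem mul_fig8a_add_fig8b (hx : x ≠ 0) (hxy : x * y = q ^ 2) :
    x * fig8a q y + q ^ 2 * y * fig8b q x = y := by
  obtain rfl := eq_sq_mul_inv_of_mul_eq_sq hx hxy
  simp only [fig8a, fig8b, zpow_neg, zpow_ofNat]
  field_simp
  ring

end

/-- With `f'(X) := f(q²X⁻¹)`, the identities `b' = −b`, `c' = −q²X⁻²·c`,
`a·a' − q⁴·b·b' = 1`, and `a'·c + q²·b'·c' + c' = 0` hold in `ℂ(q)(X)`. -/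
theorem fig8_identities {F : Type*} [Field F] (q X : F) (hq : q ≠ 0) (hX : X ≠ 0) :
    fig8b q (q ^ 2 * X⁻¹) = - fig8b q X ∧
    fig8c q (q ^ 2 * X⁻¹) = - q ^ 2 * X ^ (-2 : ℤ) * fig8c q X ∧
    fig8a q X * fig8a q (q ^ 2 * X⁻¹) - q ^ 4 * fig8b q X * fig8b q (q ^ 2 * X⁻¹) = 1 ∧
    fig8a q (q ^ 2 * X⁻¹) * fig8c q X
      + q ^ 2 * fig8b q (q ^ 2 * X⁻¹) * fig8c q (q ^ 2 * X⁻¹)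
      + fig8c q (q ^ 2 * X⁻¹) = 0 := by
  set Y := q ^ 2 * X⁻¹ with hY
  have hXY : X * Y = q ^ 2 := by
    rw [hY]
    field_simp
  have hb' : fig8b q Y = -fig8b q X := fig8b_of_mul_eq_sq hX hXY
  have hc' : fig8c q Y = Y * fig8b q X := by
    rw [fig8c_eq_neg_mul_fig8b, hb']
    ring
  rw [hb', hc', fig8c_eq_neg_mul_fig8b]
  refine ⟨rfl, ?_, ?_, ?_⟩
  · rw [hY, zpow_neg, zpow_ofNat]
    field_simp
  · linear_combination fig8a_mul_fig8a_add_fig8b_sq hq hX hXY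
  · linear_combination (-fig8b q X) * mul_fig8a_add_fig8b hX hXY

end
end

section
/- With a, b, c and f ↦ f' as above, let B = diag(−1, 1, 1) and A(X) the 3×3 upper-triangular matrix with first row (−1, c, q²c'), second row (0, a, q⁴b'), third row (0, b, a'). Then A(X)·B·A(q²X⁻¹) = B. -/
/-!
Write `Y = q²X⁻¹`, so that `XY = q²` and `X ↦ q²X⁻¹` is an involution: `A(Y)` is `A(X)` with the
roles of `X` and `Y` exchanged. Multiplying out `A(X)·B·A(Y)`, the relation reduces to three
Laurent-polynomial identities on the curve `XY = q²`: `b(Y) = -b(X)` (which kills the off-diagonal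
entries of the lower 2×2 block), `a(X)a(Y) + q⁴b(X)² = 1` (its diagonal), and
`c(X)(1 + q²b(X)) + c(Y)a(X) = 0` together with its mirror image (the first row).
-/

noncomputable section

/-- The 3×3 matrix `A(x)` with rows `(−1, c, q²c')`, `(0, a, q⁴b')`, `(0, b, a')`,
where `f'(X) := f(q²X⁻¹)`. -/
def fig8A {F : Type*} [Field F] (q x : F) : Matrix (Fin 3) (Fin 3) F :=
  !![-1, fig8c q x, q ^ 2 * fig8c q (q ^ 2 * x⁻¹);
     0, fig8a q x, q ^ 4 * fig8b q (q ^ 2 * x⁻¹);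
     0, fig8b q x, fig8a q (q ^ 2 * x⁻¹)]

section

variable {F : Type*} [Field F] {q X Y : F}

theorem fig8b_eq_neg_of_mul_eq (hX : X ≠ 0) (hXY : X * Y = q ^ 2) :
    fig8b q Y = -fig8b q X := by
  obtain rfl := eq_div_of_mul_eq hX (by rw [mul_comm, hXY])
  simp only [fig8b, zpow_neg, zpow_ofNat]
  field_simp
  ring

theorem fig8a_mul_fig8a_add_of_mul_eq (hq : q ≠ 0) (hX : X ≠ 0) (hXY : X * Y = q ^ 2) :
    fig8a q X * fig8a q Y + q ^ 4 * fig8b q X ^ 2 = 1 := by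
  obtain rfl := eq_div_of_mul_eq hX (by rw [mul_comm, hXY])
  simp only [fig8a, fig8b, zpow_neg, zpow_ofNat]
  field_simp
  ring

theorem fig8c_mul_add_of_mul_eq (hq : q ≠ 0) (hX : X ≠ 0) (hXY : X * Y = q ^ 2) :
    fig8c q X * (1 + q ^ 2 * fig8b q X) + fig8c q Y * fig8a q X = 0 := by
  obtain rfl := eq_div_of_mul_eq hX (by rw [mul_comm, hXY])
  simp only [fig8a, fig8b, fig8c, zpow_neg, zpow_ofNat]
  field_simp
  ring

theorem fig8A_eq_of_mul_eq (hX : X ≠ 0) (hXY : X * Y = q ^ 2) :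
    fig8A q X = !![-1, fig8c q X, q ^ 2 * fig8c q Y;
      0, fig8a q X, q ^ 4 * fig8b q Y;
      0, fig8b q X, fig8a q Y] := by
  obtain rfl := eq_div_of_mul_eq hX (by rw [mul_comm, hXY])
  rw [fig8A, div_eq_mul_inv]

theorem fig8A_mul_diag_mul_of_mul_eq (hq : q ≠ 0) (hX : X ≠ 0) (hXY : X * Y = q ^ 2) :
    fig8A q X * !![(-1 : F), 0, 0; 0, 1, 0; 0, 0, 1] * fig8A q Y
      = !![(-1 : F), 0, 0; 0, 1, 0; 0, 0, 1] := by
  have hY : Y ≠ 0 := right_ne_zero_of_mul (hXY ▸ pow_ne_zero 2 hq)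
  have hYX : Y * X = q ^ 2 := by rw [mul_comm, hXY]
  have hb := fig8b_eq_neg_of_mul_eq hX hXY
  have ha := fig8a_mul_fig8a_add_of_mul_eq hq hX hXY
  have hcX := fig8c_mul_add_of_mul_eq hq hX hXY
  have hcY := fig8c_mul_add_of_mul_eq hq hY hYX
  rw [hb] at hcY
  rw [fig8A_eq_of_mul_eq hX hXY, fig8A_eq_of_mul_eq hY hYX, Matrix.mul_fin_three,
    Matrix.mul_fin_three, hb]
  simp only [mul_zero, zero_mul, add_zero, zero_add, mul_one, one_mul, mul_neg, neg_mul, neg_neg,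
    neg_zero]
  congr!
  · linear_combination hcY
  · linear_combination q ^ 2 * hcX
  · linear_combination ha
  · ring
  · ring
  · linear_combination ha

end

/-- With `B = diag(−1, 1, 1)`: `A(X)·B·A(q²X⁻¹) = B`, verifying the `A_q ⋊ ℤ₂`-module
structure on the nonsymmetric skein module of the figure eight knot complement. -/
theorem fig8A_relation {F : Type*} [Field F] (q X : F) (hq : q ≠ 0) (hX : X ≠ 0) :
    fig8A q X * !![(-1 : F), 0, 0; 0, 1, 0; 0, 0, 1] * fig8A q (q ^ 2 * X⁻¹)
      = !![(-1 : F), 0, 0; 0, 1, 0; 0, 0, 1] :=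
  fig8A_mul_diag_mul_of_mul_eq hq hX (by field_simp)

end
end

section
/- Let q be transcendental over ℚ (or not a root of unity). Define an action of operators on M = ℂ(q)[X,X⁻¹] ⊕ ℂ(q)[X,X⁻¹] (basis u, v) by: X acts by multiplication; Y·u = −u, Y·v = (q²X⁻¹ − q⁶X⁻⁵)u + q⁶X⁻⁶·v extended by Y·(f(X)m) = f(q⁻²X)·(Y·m); s·u = −u with s·(f(X)u) = f(X⁻¹)·(s·u), and s·v = v with s·(f(X)v) = f(X⁻¹)·v. Then the short exact sequence 0 → ℂ(q)[X,X⁻¹]u → M → M/ℂ(q)[X,X⁻¹]u → 0 of modules over the algebra generated by X^{±1}, Y^{±1}, s does not split: there is no m = v + f(X)u in M with (q⁶X⁻⁶ − Y)·m = 0. -/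
/-
Writing `m = f·u + v`, the `u`-component of `(q⁶X⁻⁶ − Y)·m = 0` reads
`q⁶X⁻⁶ f(X) + f(q⁻²X) = q²X⁻¹ − q⁶X⁻⁵`. For `f ≠ 0` with exponents between `n` and `N`, the left
side has nonzero coefficients at `n − 6` and at `N`, six or more apart, while the right side is
supported on `{−5, −1}`; and `f = 0` is impossible since the right side is nonzero.
-/

open LaurentPolynomial

noncomputable section

/-- The field `ℂ(q)` with `q` a formal parameter (in particular, not a root of unity). -/
abbrev Kq : Type := RatFunc ℂ

/-- The transcendental parameter `q`. -/
def qq : Kq := RatFunc.X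

/-- Substitution `X ↦ c·X` on Laurent polynomials over `ℂ(q)`. -/
def substScale (c : Kq) (f : LaurentPolynomial Kq) : LaurentPolynomial Kq :=
  Finsupp.sum (AddMonoidAlgebra.coeff f) (fun n a => C (a * c ^ n) * T n)

/-- Substitution `X ↦ X⁻¹` on Laurent polynomials over `ℂ(q)`. -/
def substInv (f : LaurentPolynomial Kq) : LaurentPolynomial Kq :=
  Finsupp.sum (AddMonoidAlgebra.coeff f) (fun n a => C a * T (-n))

/-- The nonsymmetric skein module of the trefoil complement:
`M = ℂ(q)[X,X⁻¹]·u ⊕ ℂ(q)[X,X⁻¹]·v`, recorded as pairs `(f, g)` with `m = f·u + g·v`. -/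
abbrev TrefoilM : Type := LaurentPolynomial Kq × LaurentPolynomial Kq

/-- The action of `Y`: `Y·u = −u`, `Y·v = (q²X⁻¹ − q⁶X⁻⁵)u + q⁶X⁻⁶·v`, extended by
`Y·(f(X)·m) = f(q⁻²X)·(Y·m)`. -/
def trefoilY (m : TrefoilM) : TrefoilM :=
  (- substScale (qq ^ (-2 : ℤ)) m.1
      + (C (qq ^ 2) * T (-1) - C (qq ^ 6) * T (-5)) * substScale (qq ^ (-2 : ℤ)) m.2,
    C (qq ^ 6) * T (-6) * substScale (qq ^ (-2 : ℤ)) m.2)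

/-- The action of `s`: `s·u = −u`, `s·v = v`, extended by `s·(f(X)·m) = f(X⁻¹)·(s·m)`. -/
def trefoilS (m : TrefoilM) : TrefoilM :=
  (- substInv m.1, substInv m.2)

lemma coeff_substScale (c : Kq) (f : LaurentPolynomial Kq) (m : ℤ) :
    (substScale c f).coeff m = f.coeff m * c ^ m := by
  classical
  simp only [substScale, ← single_eq_C_mul_T, AddMonoidAlgebra.coeff_finsuppSum,
    Finsupp.sum_apply, AddMonoidAlgebra.coeff_single, Finsupp.single_apply]
  rw [Finsupp.sum, Finset.sum_ite_eq']
  split_ifs with hm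
  · rfl
  · rw [Finsupp.notMem_support_iff.mp hm, zero_mul]

lemma substScale_one (c : Kq) : substScale c 1 = 1 := by
  ext m
  rw [coeff_substScale, ← T_zero, T_apply]
  split_ifs with h
  · rw [← h, zpow_zero, one_mul]
  · rw [zero_mul]

lemma coeff_C_mul_T_mul {R : Type*} [Semiring R] (a : R) (k : ℤ) (f : R[T;T⁻¹]) (m : ℤ) :
    (C a * T k * f).coeff m = a * f.coeff (m - k) := by
  rw [← single_eq_C_mul_T, AddMonoidAlgebra.coeff_single_mul_apply, neg_add_eq_sub]

lemma coeff_C_mul_T {R : Type*} [Semiring R] (a : R) (k m : ℤ) :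
    (C a * T k).coeff m = if k = m then a else 0 := by
  rw [← single_eq_C_mul_T, AddMonoidAlgebra.coeff_single, Finsupp.single_apply]

/- If `n ≤ N` are the extreme exponents of `f`, then `X⁻ᵏ f` alone contributes at `n - k` and
`f(cX)` alone contributes at `N`. -/
theorem exists_wide_support_C_mul_T_neg_mul_add_substScale {a c : Kq} {k : ℤ} (ha : a ≠ 0)
    (hc : c ≠ 0) (hk : 0 < k) {f : LaurentPolynomial Kq} (hf : f ≠ 0) :
    ∃ i j, (C a * T (-k) * f + substScale c f).coeff i ≠ 0 ∧
      (C a * T (-k) * f + substScale c f).coeff j ≠ 0 ∧ i + k ≤ j := by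
  have hs : f.coeff.support.Nonempty := by
    rw [Finsupp.support_nonempty_iff]
    contrapose! hf
    ext m; simp [hf]
  set n := f.coeff.support.min' hs
  set N := f.coeff.support.max' hs
  have hn : f.coeff n ≠ 0 := Finsupp.mem_support_iff.mp (f.coeff.support.min'_mem hs)
  have hN : f.coeff N ≠ 0 := Finsupp.mem_support_iff.mp (f.coeff.support.max'_mem hs)
  have below : f.coeff (n - k) = 0 := Finsupp.notMem_support_iff.mp fun h ↦ by
    have := f.coeff.support.min'_le _ h; omega
  have above : f.coeff (N + k) = 0 := Finsupp.notMem_support_iff.mp fun h ↦ by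
    have := f.coeff.support.le_max' _ h; omega
  refine ⟨n - k, N, ?_, ?_, by simpa using f.coeff.support.min'_le_max' hs⟩
  · simp [coeff_C_mul_T_mul, coeff_substScale, below, ha, hn]
  · simp [coeff_C_mul_T_mul, coeff_substScale, above, hN, zpow_ne_zero _ hc]

/-- The short exact sequence `0 → ℂ(q)[X,X⁻¹]u → M → M/ℂ(q)[X,X⁻¹]u → 0` of the trefoil
skein module does not split: there is no `m = v + f(X)·u ∈ M` with `(q⁶X⁻⁶ − Y)·m = 0`. -/
theorem trefoil_sequence_nonsplit :
    ¬ ∃ f : LaurentPolynomial Kq,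
      (C (qq ^ 6) * T (-6) * f, C (qq ^ 6) * T (-6) * 1) = trefoilY (f, 1) := by
  rintro ⟨f, h⟩
  set g : LaurentPolynomial Kq := C (qq ^ 2) * T (-1) - C (qq ^ 6) * T (-5)
  have hq : qq ≠ 0 := RatFunc.X_ne_zero
  have coeff_g (m : ℤ) :
      g.coeff m = (if -1 = m then qq ^ 2 else 0) - (if -5 = m then qq ^ 6 else 0) := by
    rw [AddMonoidAlgebra.coeff_sub, Finsupp.sub_apply, coeff_C_mul_T, coeff_C_mul_T]
  have support_g (m : ℤ) (hm : g.coeff m ≠ 0) : m = -1 ∨ m = -5 := by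
    contrapose! hm
    rw [coeff_g, if_neg hm.1.symm, if_neg hm.2.symm, sub_zero]
  have hfg : C (qq ^ 6) * T (-6) * f + substScale (qq ^ (-2 : ℤ)) f = g := by
    have := congrArg Prod.fst h
    simp only [trefoilY, substScale_one, mul_one] at this
    linear_combination this
  have hf : f ≠ 0 := by
    rintro rfl
    have := congrArg (·.coeff (-1)) hfg
    simp [coeff_substScale, coeff_g] at this
    exact pow_ne_zero 2 hq this.symm
  obtain ⟨i, j, hi, hj, hij⟩ := exists_wide_support_C_mul_T_neg_mul_add_substScale
    (pow_ne_zero 6 hq) (zpow_ne_zero _ hq) (by norm_num : (0 : ℤ) < 6) hf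
  rw [hfg] at hi hj
  rcases support_g i hi with rfl | rfl <;> rcases support_g j hj with rfl | rfl <;> norm_num at hij

end
end

section
/- Suppose a knot's colored Jones polynomials J(n) ∈ ℂ[q, q⁻¹] (extended to all n ∈ ℤ by J(−n) = −J(n)) admit Habiro's cyclotomic expansion J(n) = Σ_{k=0}^{∞} ((q^{2n} − q^{−2n})/(q² − q⁻²))·c_{n,k}·H_k with H_k ∈ ℤ[q, q⁻¹] independent of n and c_{n,k} := ∏_{i=1}^{k}(q^{4n} + q^{−4n} − q^{4i} − q^{−4i}). Then for all integers n, j, the rational function (q² − 1)·(J(n+j) + J(n−j−1))/(q^{4n−2} − 1) lies in ℂ[q, q⁻¹]. -/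
/-!
Write `T k = q^k`, `{m} = q^{2m} - q^{-2m}` and `X_m = q^{4m} + q^{-4m}`. Since `c_{m,k}` is a
polynomial in `X_m` whose coefficients do not depend on `m`, and `c_{m,k} = 0` for `k ≥ |m| > 0`,
Habiro's expansion reads `(q² - q⁻²) J(m) = {m} P(X_m)` for a single polynomial `P` and all
`|m| ≤ N`. For `a = n + j` and `b = n - j - 1` both `a + b` and `a - b` are odd, and
`q² + 1 ∣ q^{2m} + 1` for odd `m`; hence `(q² + 1)(q^{4n-2} - 1)`, with `4n - 2 = 2(a + b)`,
divides both `{a} + {b}` and `X_a - X_b`, so it divides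
`{a} P(X_a) + {b} P(X_b) = {a} (P(X_a) - P(X_b)) + ({a} + {b}) P(X_b)`.
Cancelling `q² + 1` in the domain `ℂ[q, q⁻¹]` gives the claim.
-/

open LaurentPolynomial

/-- `c_{n,k} = ∏_{i=1}^{k} (q^{4n} + q^{−4n} − q^{4i} − q^{−4i})` in `ℂ[q,q⁻¹]`. -/
noncomputable def habiroC (m : ℤ) (k : ℕ) : LaurentPolynomial ℂ :=
  ∏ i ∈ Finset.range k,
    (T (4 * m) + T (-(4 * m)) - T (4 * ((i : ℤ) + 1)) - T (-(4 * ((i : ℤ) + 1))))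

/-- Coefficientwise inclusion `ℤ[q,q⁻¹] → ℂ[q,q⁻¹]`. -/
noncomputable def laurentIntToComplex (f : LaurentPolynomial ℤ) : LaurentPolynomial ℂ :=
  AddMonoidAlgebra.ofCoeff (Finsupp.mapRange (fun z : ℤ => (z : ℂ)) (by simp) f.coeff)

namespace LaurentPolynomial

variable {R : Type*} [CommRing R]

theorem T_sub_T_neg (k : ℤ) : (T k - T (-k) : R[T;T⁻¹]) = T (-k) * (T k + 1) * (T k - 1) := by
  simp only [mul_add, add_mul, mul_sub, mul_one, ← T_add]
  ring_nf

theorem T_sub_T_neg_add_T_sub_T_neg (a b : ℤ) :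
    (T (2 * a) - T (-(2 * a)) + (T (2 * b) - T (-(2 * b))) : R[T;T⁻¹]) =
      T (-(2 * a)) * (T (2 * (a - b)) + 1) * (T (2 * (a + b)) - 1) := by
  simp only [mul_add, add_mul, mul_sub, mul_one, ← T_add]
  ring_nf

theorem T_add_T_neg_sub_T_add_T_neg (a b : ℤ) :
    (T (4 * a) + T (-(4 * a)) - (T (4 * b) + T (-(4 * b))) : R[T;T⁻¹]) =
      (T (4 * a) - T (4 * b)) * T (-(4 * (a + b))) *
        ((T (2 * (a + b)) + 1) * (T (2 * (a + b)) - 1)) := by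
  simp only [mul_add, add_mul, mul_sub, sub_mul, mul_one, one_mul, ← T_add]
  ring_nf

theorem T_add_one_dvd_T_mul_add_one (k : ℤ) {m : ℤ} (hm : Odd m) :
    (T k + 1 : R[T;T⁻¹]) ∣ T (k * m) + 1 := by
  have hnat : ∀ n : ℕ, Odd n → (T k + 1 : R[T;T⁻¹]) ∣ T (k * n) + 1 := fun n hn => by
    simpa [T_pow, mul_comm] using Odd.add_dvd_pow_add_pow (T k : R[T;T⁻¹]) 1 hn
  obtain ⟨n, rfl | rfl⟩ := Int.eq_nat_or_neg m
  · exact hnat n (by simpa using hm)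
  · have h : (T (k * -n) + 1 : R[T;T⁻¹]) = T (k * -n) * (T (k * n) + 1) := by
      rw [mul_add, ← T_add, mul_neg, neg_add_cancel, T_zero, mul_one, add_comm]
    rw [h]
    exact (hnat n (by simpa using hm)).mul_left _

theorem T_add_one_ne_zero [Nontrivial R] {k : ℤ} (hk : k ≠ 0) :
    (T k + 1 : R[T;T⁻¹]) ≠ 0 := by
  intro h
  simpa [← T_zero, Ne.symm hk] using congrArg (fun p : R[T;T⁻¹] => p.coeff k) h

theorem dvd_T_sub_one_mul_of_T_add_one_mul_dvd [IsDomain R] {k : ℤ} (hk : k ≠ 0)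
    {d f : R[T;T⁻¹]} (h : (T k + 1) * d ∣ (T k - T (-k)) * f) : d ∣ (T k - 1) * f := by
  rw [T_sub_T_neg, show T (-k) * (T k + 1) * (T k - 1) * f = (T k + 1) * (T (-k) * ((T k - 1) * f))
    by ring, mul_dvd_mul_iff_left (T_add_one_ne_zero hk)] at h
  exact (isUnit_T (-k)).dvd_mul_left.mp h

theorem mul_T_sub_one_dvd_T_sub_T_neg_mul_eval_add {d : R[T;T⁻¹]} {a b : ℤ}
    (hsub : d ∣ T (2 * (a - b)) + 1) (hadd : d ∣ T (2 * (a + b)) + 1)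
    (P : Polynomial R[T;T⁻¹]) :
    d * (T (2 * (a + b)) - 1) ∣ (T (2 * a) - T (-(2 * a))) * P.eval (T (4 * a) + T (-(4 * a))) +
      (T (2 * b) - T (-(2 * b))) * P.eval (T (4 * b) + T (-(4 * b))) := by
  have hX : d * (T (2 * (a + b)) - 1) ∣
      T (4 * a) + T (-(4 * a)) - (T (4 * b) + T (-(4 * b))) := by
    rw [T_add_T_neg_sub_T_add_T_neg]
    exact dvd_mul_of_dvd_right (mul_dvd_mul hadd dvd_rfl) _
  have hsum : d * (T (2 * (a + b)) - 1) ∣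
      T (2 * a) - T (-(2 * a)) + (T (2 * b) - T (-(2 * b))) := by
    rw [T_sub_T_neg_add_T_sub_T_neg, mul_assoc]
    exact dvd_mul_of_dvd_right (mul_dvd_mul hsub dvd_rfl) _
  have hsplit : ∀ x y : R[T;T⁻¹],
      (T (2 * a) - T (-(2 * a))) * x + (T (2 * b) - T (-(2 * b))) * y =
      (T (2 * a) - T (-(2 * a))) * (x - y) +
        (T (2 * a) - T (-(2 * a)) + (T (2 * b) - T (-(2 * b)))) * y := fun x y => by ring
  rw [hsplit]
  exact dvd_add (dvd_mul_of_dvd_right (hX.trans (Polynomial.sub_dvd_eval_sub _ _ P)) _)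
    (dvd_mul_of_dvd_left hsum _)

end LaurentPolynomial

noncomputable def habiroPoly (h : ℕ → LaurentPolynomial ℂ) (N : ℕ) :
    Polynomial (LaurentPolynomial ℂ) :=
  ∑ k ∈ Finset.range N, (∏ i ∈ Finset.range k,
    (Polynomial.X - Polynomial.C (T (4 * ((i : ℤ) + 1)) + T (-(4 * ((i : ℤ) + 1)))))) *
      Polynomial.C (h k)

theorem habiroPoly_eval (h : ℕ → LaurentPolynomial ℂ) (N : ℕ) (m : ℤ) :
    (habiroPoly h N).eval (T (4 * m) + T (-(4 * m))) =
      ∑ k ∈ Finset.range N, habiroC m k * h k := by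
  simp [habiroPoly, habiroC, Polynomial.eval_finsetSum, Polynomial.eval_prod, sub_sub]

theorem habiroC_eq_zero {m : ℤ} {k : ℕ} (hm : m ≠ 0) (hk : m.natAbs ≤ k) :
    habiroC m k = 0 := by
  have h0 : 1 ≤ m.natAbs := Int.natAbs_pos.2 hm
  apply Finset.prod_eq_zero (i := m.natAbs - 1) (Finset.mem_range.2 (by omega))
  rw [show ((m.natAbs - 1 : ℕ) : ℤ) + 1 = |m| by rw [← Int.natCast_natAbs]; omega]
  rcases abs_choice m with h | h <;> rw [h] <;> ring_nf

theorem T_sub_T_neg_mul_sum_habiroC_eq_eval (h : ℕ → LaurentPolynomial ℂ) {m : ℤ} {N : ℕ}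
    (hN : m.natAbs ≤ N) :
    (T (2 * m) - T (-(2 * m))) * ∑ k ∈ Finset.range m.natAbs, habiroC m k * h k =
      (T (2 * m) - T (-(2 * m))) * (habiroPoly h N).eval (T (4 * m) + T (-(4 * m))) := by
  rw [habiroPoly_eval]
  rcases eq_or_ne m 0 with rfl | hm
  · simp
  · congr 1
    refine Finset.sum_subset (Finset.range_subset_range.mpr hN) fun k _ hk => ?_
    rw [habiroC_eq_zero hm (by simpa using hk), zero_mul]

theorem habiro_implies_divisibility_general (J : ℤ → LaurentPolynomial ℂ)
    (H : ℕ → LaurentPolynomial ℤ)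
    (hhabiro : ∀ n : ℤ,
      (T 2 - T (-2)) * J n
        = (T (2 * n) - T (-(2 * n))) *
            ∑ k ∈ Finset.range n.natAbs, habiroC n k * laurentIntToComplex (H k)) :
    ∀ n j : ℤ,
      (T (4 * n - 2) - 1 : LaurentPolynomial ℂ) ∣ (T 2 - 1) * (J (n + j) + J (n - j - 1)) := by
  intro n j
  set N := max (n + j).natAbs (n - j - 1).natAbs
  set P := habiroPoly (fun k => laurentIntToComplex (H k)) N
  have hJ : ∀ m : ℤ, m.natAbs ≤ N →
      (T 2 - T (-2)) * J m = (T (2 * m) - T (-(2 * m))) * P.eval (T (4 * m) + T (-(4 * m))) :=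
    fun m hm => (hhabiro m).trans (T_sub_T_neg_mul_sum_habiroC_eq_eval _ hm)
  have hsub : (T 2 + 1 : LaurentPolynomial ℂ) ∣ T (2 * ((n + j) - (n - j - 1))) + 1 :=
    T_add_one_dvd_T_mul_add_one 2 ⟨j, by ring⟩
  have hadd : (T 2 + 1 : LaurentPolynomial ℂ) ∣ T (2 * ((n + j) + (n - j - 1))) + 1 :=
    T_add_one_dvd_T_mul_add_one 2 ⟨n - 1, by ring⟩
  have hdvd := mul_T_sub_one_dvd_T_sub_T_neg_mul_eval_add hsub hadd P
  rw [← hJ _ (le_max_left _ _), ← hJ _ (le_max_right _ _),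
    show 2 * ((n + j) + (n - j - 1)) = 4 * n - 2 by ring, ← mul_add] at hdvd
  exact dvd_T_sub_one_mul_of_T_add_one_mul_dvd two_ne_zero hdvd

/-- If the colored Jones polynomials `J(n) ∈ ℂ[q,q⁻¹]` of a knot (extended to `n ∈ ℤ` by
`J(−n) = −J(n)`) admit Habiro's cyclotomic expansion
`J(n) = Σ_k ((q^{2n} − q^{−2n})/(q² − q⁻²))·c_{n,k}·H_k` with `H_k ∈ ℤ[q,q⁻¹]`
independent of `n` (the sum being finite since `c_{n,k} = 0` for `k ≥ |n|`), then for all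
integers `n, j` the rational function `(q² − 1)(J(n+j) + J(n−j−1))/(q^{4n−2} − 1)` is a
Laurent polynomial, i.e. `(q^{4n−2} − 1) ∣ (q² − 1)(J(n+j) + J(n−j−1))` in `ℂ[q,q⁻¹]`. -/
theorem habiro_implies_divisibility (J : ℤ → LaurentPolynomial ℂ)
    (H : ℕ → LaurentPolynomial ℤ)
    (hodd : ∀ n : ℤ, J (-n) = - J n)
    (hhabiro : ∀ n : ℤ,
      (T 2 - T (-2)) * J n
        = (T (2 * n) - T (-(2 * n))) *
            ∑ k ∈ Finset.range n.natAbs, habiroC n k * laurentIntToComplex (H k)) :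
    ∀ n j : ℤ,
      (T (4 * n - 2) - 1 : LaurentPolynomial ℂ) ∣ (T 2 - 1) * (J (n + j) + J (n - j - 1)) :=
  habiro_implies_divisibility_general J H hhabiro
end

section
/- Let M = ℂ(q)[X, X⁻¹] ⊗ V for a finite-dimensional vector space V, with operators S·(f(X)⊗v) = f(X⁻¹)⊗v and P·(f(X)⊗v) = f(q⁻²X)⊗v. Suppose A(X), B(X) are ℂ(q)[X,X⁻¹]-linear endomorphisms of M (matrices over ℂ(q)[X,X⁻¹]) satisfying B(X⁻¹)B(X) = Id and A(X)B(q⁻²X)A(q²X⁻¹) = B(X). Set Y := A(X)P and s := B(X)S. If furthermore (1 − B(X)A(X⁻¹))M ⊆ (1 − q²X²)M, then the operator U₀ := (1 − q²X²)⁻¹(1 − sY), a priori defined on the localization of M at nonzero polynomials in X, maps M into M. -/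
/-! With `N := B(X)A(X⁻¹)` and `u := S P v`, i.e. `u(X) = v(q⁻²X⁻¹)`, one has
`v − N u = (1 − N) v + N (v − u)`. The first summand lies in `(1 − q²X²)M` by hypothesis, the
second because `1 − q²X²` divides `f(X) − f(q⁻²X⁻¹)` for every Laurent polynomial `f`: on a
monomial, `Xⁿ − q⁻²ⁿX⁻ⁿ = −q⁻²ⁿX⁻ⁿ(1 − (q²X²)ⁿ)`, and `1 − x ∣ 1 − xⁿ`. -/

open LaurentPolynomial

noncomputable section

/-- Substitution `X ↦ c·X⁻¹` on Laurent polynomials over `ℂ(q)`. -/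
def substInvScale (c : Kq) (f : LaurentPolynomial Kq) : LaurentPolynomial Kq :=
  Finsupp.sum (AddMonoidAlgebra.coeff f) (fun n a => C (a * c ^ n) * T (-n))

open scoped Matrix

lemma substInv_eq_invert (f : LaurentPolynomial Kq) : substInv f = invert f := by
  rw [substInv]
  conv_rhs => rw [← AddMonoidAlgebra.sum_coeff_single f]
  rw [map_finsuppSum]
  exact Finsupp.sum_congr fun n _ => by rw [single_eq_C_mul_T, map_mul, invert_C, invert_T]

lemma substScale_eq_sum (c : Kq) (f : LaurentPolynomial Kq) :
    substScale c f = f.coeff.sum fun n a => C a * (C (c ^ n) * T n) := by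
  rw [substScale]
  exact Finsupp.sum_congr fun n _ => by rw [map_mul, mul_assoc]

namespace LaurentPolynomial

variable {K : Type*} [Field K]

lemma one_sub_C_inv_mul_T_two_dvd_T_sub_natCast (c : K) (hc : c ≠ 0) (n : ℕ) :
    (1 - C c⁻¹ * T 2) ∣ T n - C (c ^ n) * T (-n) := by
  have hC : C (c ^ n) * C (c⁻¹ ^ n) = (1 : K[T;T⁻¹]) := by
    rw [← map_mul, ← mul_pow, mul_inv_cancel₀ hc, one_pow, map_one]
  have hT : T (-n) * T (n * 2) = (T n : K[T;T⁻¹]) := by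
    rw [← T_add]
    ring_nf
  have hfactor : T n - C (c ^ n) * T (-n) = -(C (c ^ n) * T (-n)) * (1 - (C c⁻¹ * T 2) ^ n) := by
    rw [mul_pow, ← map_pow, T_pow]
    linear_combination (-T (n * 2) * T (-n)) * hC - hT
  rw [hfactor]
  exact (one_sub_dvd_one_sub_pow _ n).mul_left _

lemma one_sub_C_inv_mul_T_two_dvd_T_sub (c : K) (hc : c ≠ 0) (n : ℤ) :
    (1 - C c⁻¹ * T 2) ∣ T n - C (c ^ n) * T (-n) := by
  obtain ⟨m, rfl | rfl⟩ := Int.eq_nat_or_neg n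
  · exact_mod_cast one_sub_C_inv_mul_T_two_dvd_T_sub_natCast c hc m
  · have hreflect : T (-m) - C (c ^ (-m : ℤ)) * T (- -m) =
        -C (c ^ (-m : ℤ)) * (T m - C (c ^ (m : ℤ)) * T (-m)) := by
      have hC : C (c ^ (-m : ℤ)) * C (c ^ (m : ℤ)) = (1 : K[T;T⁻¹]) := by
        rw [← map_mul, ← zpow_add₀ hc, neg_add_cancel, zpow_zero, map_one]
      rw [neg_neg]
      linear_combination (-T (-m)) * hC
    rw [hreflect, zpow_natCast]
    exact (one_sub_C_inv_mul_T_two_dvd_T_sub_natCast c hc m).mul_left _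

end LaurentPolynomial

lemma one_sub_C_inv_mul_T_two_dvd_sub_substInv_substScale (c : Kq) (hc : c ≠ 0)
    (f : LaurentPolynomial Kq) :
    (1 - C c⁻¹ * T 2) ∣ f - substInv (substScale c f) := by
  rw [substInv_eq_invert, substScale_eq_sum, map_finsuppSum]
  conv => arg 2; arg 1; rw [← AddMonoidAlgebra.sum_coeff_single f]
  rw [← Finsupp.sum_sub]
  refine Finset.dvd_sum fun n _ => ?_
  dsimp only
  rw [single_eq_C_mul_T, map_mul, map_mul, invert_C, invert_C, invert_T, ← mul_sub]
  exact (one_sub_C_inv_mul_T_two_dvd_T_sub c hc n).mul_left _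

lemma Matrix.exists_smul_eq_sub_mulVec {R n : Type*} [CommRing R] [Fintype n] [DecidableEq n]
    {g : R} {N : Matrix n n R} {v u : n → R} (hN : ∃ w, g • w = (1 - N) *ᵥ v)
    (hvu : ∀ i, g ∣ v i - u i) : ∃ w, g • w = v - N *ᵥ u := by
  obtain ⟨w₁, hw₁⟩ := hN
  choose w₂ hw₂ using hvu
  have hw₂' : g • w₂ = v - u := funext fun i => (hw₂ i).symm
  refine ⟨w₁ + N *ᵥ w₂, ?_⟩
  rw [smul_add, ← Matrix.mulVec_smul, hw₂', hw₁, Matrix.sub_mulVec, Matrix.one_mulVec,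
    Matrix.mulVec_sub]
  abel

theorem U0_preserves_module_general (d : ℕ)
    (A B : Matrix (Fin d) (Fin d) (LaurentPolynomial Kq))
    (hKey : ∀ v : Fin d → LaurentPolynomial Kq,
      ∃ w : Fin d → LaurentPolynomial Kq,
        ((1 : LaurentPolynomial Kq) - C (qq ^ 2) * T 2) • w
          = ((1 : Matrix (Fin d) (Fin d) (LaurentPolynomial Kq))
              - B * (A.map substInv)).mulVec v) :
    ∀ v : Fin d → LaurentPolynomial Kq,
      ∃ w : Fin d → LaurentPolynomial Kq,
        ((1 : LaurentPolynomial Kq) - C (qq ^ 2) * T 2) • w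
          = v - B.mulVec (fun i =>
              substInv ((A.mulVec (fun k => substScale (qq ^ (-2 : ℤ)) (v k))) i)) := by
  intro v
  have hsubstInv : substInv = invert := funext substInv_eq_invert
  have hqq : (qq ^ (-2 : ℤ))⁻¹ = qq ^ 2 := by rw [zpow_neg, inv_inv]; norm_cast
  have hdvd (k : Fin d) :
      1 - C (qq ^ 2) * T 2 ∣ v k - substInv (substScale (qq ^ (-2 : ℤ)) (v k)) :=
    hqq ▸ one_sub_C_inv_mul_T_two_dvd_sub_substInv_substScale _
      (zpow_ne_zero _ RatFunc.X_ne_zero) _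
  have hmulVec : (fun i => substInv ((A *ᵥ fun k => substScale (qq ^ (-2 : ℤ)) (v k)) i)) =
      A.map substInv *ᵥ fun k => substInv (substScale (qq ^ (-2 : ℤ)) (v k)) := by
    rw [hsubstInv]
    exact funext (RingHom.map_mulVec (invert : Kq[T;T⁻¹] ≃ₐ[Kq] Kq[T;T⁻¹]).toRingHom A _)
  rw [hmulVec, Matrix.mulVec_mulVec]
  exact Matrix.exists_smul_eq_sub_mulVec (hKey v) hdvd

/-- Let `M = ℂ(q)[X,X⁻¹] ⊗ V ≅ (Fin d → ℂ(q)[X,X⁻¹])` for a finite-dimensional `V`,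
with `S·(f(X)⊗v) = f(X⁻¹)⊗v` and `P·(f(X)⊗v) = f(q⁻²X)⊗v`.  Suppose the matrices
`A(X), B(X)` over `ℂ(q)[X,X⁻¹]` satisfy `B(X⁻¹)B(X) = Id` and
`A(X)B(q⁻²X)A(q²X⁻¹) = B(X)`, and set `Y := A(X)P`, `s := B(X)S`.  If
`(1 − B(X)A(X⁻¹))M ⊆ (1 − q²X²)M`, then `U₀ = (1 − q²X²)⁻¹(1 − sY)` maps `M` into
`M`, i.e. for every `m ∈ M` there is `m' ∈ M` with `(1 − q²X²)·m' = m − sY·m`. -/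
theorem U0_preserves_module (d : ℕ)
    (A B : Matrix (Fin d) (Fin d) (LaurentPolynomial Kq))
    (hB : (B.map substInv) * B = 1)
    (hA : A * (B.map (substScale (qq ^ (-2 : ℤ)))) * (A.map (substInvScale (qq ^ 2))) = B)
    (hKey : ∀ v : Fin d → LaurentPolynomial Kq,
      ∃ w : Fin d → LaurentPolynomial Kq,
        ((1 : LaurentPolynomial Kq) - C (qq ^ 2) * T 2) • w
          = ((1 : Matrix (Fin d) (Fin d) (LaurentPolynomial Kq))
              - B * (A.map substInv)).mulVec v) :
    ∀ v : Fin d → LaurentPolynomial Kq,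
      ∃ w : Fin d → LaurentPolynomial Kq,
        ((1 : LaurentPolynomial Kq) - C (qq ^ 2) * T 2) • w
          = v - B.mulVec (fun i =>
              substInv ((A.mulVec (fun k => substScale (qq ^ (-2 : ℤ)) (v k))) i)) :=
  U0_preserves_module_general d A B hKey

end
end
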